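/- The hexagon with vertices (4,0), (2,1), (0,4), (4,5), (8,4), (6,1) is convex, every edge between adjacent vertices contains no intermediate lattice point, and every segment between non-adjacent vertices contains at least one intermediate lattice point. -/

import Mathlib

/-- The hexagon with vertices (4,0),(2,1),(0,4),(4,5),(8,4),(6,1) is convex (all
consecutive edge cross products have the same sign), every edge between adjacent
vertices contains no intermediate lattice point (`gcd = 1`), and every segment between
non-adjacent vertices contains an intermediate lattice point (`gcd > 1`). -/
theorem extremely_reduced_convex_hexagon :
    ∀ v : Fin 6 → ℤ × ℤ,
      v = ![(4, 0), (2, 1), (0, 4), (4, 5), (8, 4), (6, 1)] →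
      (∀ i : Fin 6,
        ((v (i + 1)).1 - (v i).1) * ((v (i + 2)).2 - (v (i + 1)).2) -
          ((v (i + 1)).2 - (v i).2) * ((v (i + 2)).1 - (v (i + 1)).1) < 0) ∧
      (∀ i : Fin 6,
        Int.gcd ((v (i + 1)).1 - (v i).1) ((v (i + 1)).2 - (v i).2) = 1) ∧
      (∀ i j : Fin 6, j ≠ i → j ≠ i + 1 → i ≠ j + 1 →
        1 < Int.gcd ((v j).1 - (v i).1) ((v j).2 - (v i).2)) := by
  rintro v rfl
  decide
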